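/- arXiv:2005.01275 — 3 statements merged into one kernel-verified Lean document; each statement's English description precedes it below -/
import Mathlib

section
/- Let F, C, A be finite index sets with maps a : F → A (assigning each fine-level flux degree of freedom to an aggregate) and b : C → A (assigning each coarse degree of freedom to an aggregate). Let M, M' be F×F real matrices, c : A → ℝ, and P an F×C real matrix, and suppose: (i) M i j = 0 whenever a i ≠ a j (M is block-diagonal with respect to the aggregates); (ii) M' i j = c (a i) * M i j for all i, j (each diagonal block of M' is the corresponding block of M multiplied by the common scalar factor of its aggregate); (iii) P i k = 0 whenever a i ≠ b k (each coarse basis column is supported on the local degrees of freedom of its own aggregate). Then the Galerkin-projected matrix satisfies Pᵀ * M' * P = diagonal (fun k => c (b k)) * (Pᵀ * M * P); in particular (Pᵀ * M' * P) k l = c (b k) * (Pᵀ * M * P) k l for all coarse degrees of freedom k, l. With c A = 1/κ(p_A), this is the statement that the product decomposition M'_{A} = (1/κ(p_A)) M_{A} of local transmissibility matrices is preserved under Galerkin coarsening (Proposition 1 of the paper). -/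
open Matrix

/-- Proposition 1: the product decomposition of local transmissibility matrices is
preserved under Galerkin coarsening. -/
theorem galerkin_preserves_product_decomposition
    {F C A : Type*} [Fintype F] [Fintype C] [Fintype A] [DecidableEq C]
    (a : F → A) (b : C → A)
    (M M' : Matrix F F ℝ) (c : A → ℝ) (P : Matrix F C ℝ)
    (hM : ∀ i j : F, a i ≠ a j → M i j = 0)
    (hM' : ∀ i j : F, M' i j = c (a i) * M i j)
    (hP : ∀ (i : F) (k : C), a i ≠ b k → P i k = 0) :
    Pᵀ * M' * P = Matrix.diagonal (fun k => c (b k)) * (Pᵀ * M * P) ∧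
      ∀ k l : C, (Pᵀ * M' * P) k l = c (b k) * (Pᵀ * M * P) k l := by
  have key : ∀ k l : C, (Pᵀ * M' * P) k l = c (b k) * (Pᵀ * M * P) k l := by
    intro k l
    simp only [Matrix.mul_apply, Matrix.transpose_apply, Finset.mul_sum,
      Finset.sum_mul]
    refine Finset.sum_congr rfl fun j _ => ?_
    refine Finset.sum_congr rfl fun i _ => ?_
    rw [hM' i j]
    by_cases hik : a i = b k
    · rw [hik]; ring
    · rw [hP i k hik]; ring
  refine ⟨?_, key⟩
  ext k l
  rw [Matrix.diagonal_mul]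
  exact key k l
end

section
/- Let L, G, A be finite index sets with maps g : L → G (assigning each local flux degree of freedom to a global flux degree of freedom) and a : L → A (assigning each local flux degree of freedom to a cell/aggregate). Let W be the Boolean L×G matrix with W i j = 1 if g i = j and 0 otherwise, and Wp the Boolean L×A matrix with Wp i c = 1 if a i = c and 0 otherwise. Let M̂ be any L×L real matrix and κv : A → ℝ with κv c ≠ 0 for all c, and suppose M̂ i j = 0 whenever a i ≠ a j (M̂ is block-diagonal over the aggregates). Define the global transmissibility matrix M := Wᵀ * (M̂ * diagonal (fun i => (κv (a i))⁻¹)) * W and, for a global flux vector σ : G → ℝ, the matrix N(σ) := Wᵀ * M̂ * diagonal (W *ᵥ σ) * Wp. Then for every σ : G → ℝ, M *ᵥ σ = N(σ) *ᵥ (fun c => (κv c)⁻¹). That is, the nonlinear term M(Π̃p)σ is linear in the vector of reciprocal permeability multipliers κ_inv(Π̃p) (Proposition 2 of the paper). -/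
open Matrix

/-- Proposition 2: the nonlinear term M(Π̃p)σ is linear in the vector of reciprocal
permeability multipliers κ_inv(Π̃p). -/
theorem transmissibility_linear_in_kappa_inv
    {L G A : Type*} [Fintype L] [Fintype G] [Fintype A]
    [DecidableEq G] [DecidableEq A] [DecidableEq L]
    (g : L → G) (a : L → A)
    (W : Matrix L G ℝ) (hW : ∀ (i : L) (j : G), W i j = if g i = j then 1 else 0)
    (Wp : Matrix L A ℝ) (hWp : ∀ (i : L) (c : A), Wp i c = if a i = c then 1 else 0)
    (Mh : Matrix L L ℝ) (hMh : ∀ i j : L, a i ≠ a j → Mh i j = 0)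
    (κv : A → ℝ) (hκv : ∀ c : A, κv c ≠ 0) :
    ∀ σ : G → ℝ,
      (Wᵀ * (Mh * Matrix.diagonal (fun i => (κv (a i))⁻¹)) * W) *ᵥ σ =
        (Wᵀ * Mh * Matrix.diagonal (W *ᵥ σ) * Wp) *ᵥ (fun c => (κv c)⁻¹) := by
  intro σ
  have h1 : Wp *ᵥ (fun c => (κv c)⁻¹) = fun i => (κv (a i))⁻¹ := by
    funext i
    simp [mulVec, dotProduct, hWp]
  have h2 : (Matrix.diagonal fun i => (κv (a i))⁻¹) *ᵥ (W *ᵥ σ) =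
      Matrix.diagonal (W *ᵥ σ) *ᵥ fun i => (κv (a i))⁻¹ := by
    funext i
    rw [mulVec_diagonal, mulVec_diagonal, mul_comm]
  simp only [← mulVec_mulVec, h1, h2]
end

section
/- Let ι and A be finite index sets with a map a : ι → A, let W be the Boolean ι×A matrix with W i c = 1 if a i = c and 0 otherwise, let m : ι → ℝ with m i > 0 for all i, and assume every aggregate is nonempty. Then for every function κ : ℝ → ℝ and every vector v : A → ℝ, ((Wᵀ * diagonal m * W)⁻¹ * Wᵀ * diagonal m) *ᵥ (fun i => κ (v (a i))) = fun c => κ (v c). That is, evaluating κ entrywise on the piecewise-constant fine-level interpolation W v and then taking volume-weighted aggregate averages is the same as evaluating κ directly on the aggregate values v; consequently κ(Π̃p) can be evaluated directly on the coarse level without visiting the finest level (the key property of the piecewise-constant projector Π̃, Appendix B of the paper). -/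
/-!
The Boolean matrix `W` of `a` interpolates an aggregate vector `u` to the fine vector `u ∘ a`,
so the argument of the projector is `W *ᵥ (κ ∘ v)`. The projector `(Wᵀ D W)⁻¹ Wᵀ D` is a left
inverse of `W` once the Gram matrix `Wᵀ D W` is invertible. That matrix is diagonal, its `c`-th
entry being the volume of the aggregate `c`, which is positive since aggregates are nonempty
and cell volumes positive.
-/

open Matrix Finset

theorem Matrix.inv_mul_mulVec_mulVec_cancel {ι A R : Type*} [Fintype ι] [Fintype A]
    [DecidableEq A] [CommRing R] (B : Matrix A ι R) (W : Matrix ι A R)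
    (h : IsUnit (B * W).det) (u : A → R) :
    ((B * W)⁻¹ * B) *ᵥ (W *ᵥ u) = u := by
  rw [mulVec_mulVec, Matrix.mul_assoc, nonsing_inv_mul _ h, one_mulVec]

section Aggregation

variable {ι A : Type*} [DecidableEq A]

def aggregationMatrix (R : Type*) [Zero R] [One R] (a : ι → A) : Matrix ι A R :=
  of fun i c => if a i = c then 1 else 0

theorem aggregationMatrix_mulVec {R : Type*} [Fintype A] [NonAssocSemiring R] (a : ι → A)
    (u : A → R) :
    aggregationMatrix R a *ᵥ u = u ∘ a := by
  ext i
  simp [aggregationMatrix, mulVec, dotProduct]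

theorem transpose_aggregationMatrix_mul_diagonal_mul {R : Type*} [Fintype ι] [DecidableEq ι]
    [NonAssocSemiring R] (a : ι → A) (m : ι → R) :
    (aggregationMatrix R a)ᵀ * diagonal m * aggregationMatrix R a =
      diagonal fun c => ∑ i with a i = c, m i := by
  ext c d
  rw [mul_apply, diagonal_apply, sum_filter]
  simp only [mul_diagonal, aggregationMatrix, transpose_apply, of_apply, ite_mul, one_mul,
    zero_mul, mul_ite, mul_one, mul_zero]
  split_ifs with hcd
  · subst hcd
    exact sum_congr rfl fun i _ => by split_ifs <;> rfl
  · refine sum_eq_zero fun i _ => ?_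
    split_ifs with hd hc
    · exact absurd (hc.symm.trans hd) hcd
    all_goals rfl

theorem sum_fiber_pos {R : Type*} [Fintype ι] [AddCommMonoid R] [PartialOrder R]
    [IsOrderedCancelAddMonoid R] (a : ι → A) {m : ι → R} (hm : ∀ i, 0 < m i) {c : A}
    (hc : ∃ i, a i = c) : 0 < ∑ i with a i = c, m i :=
  sum_pos (fun i _ => hm i) (hc.imp fun _ hi => mem_filter.2 ⟨mem_univ _, hi⟩)

end Aggregation

/-- Key property of the piecewise-constant projector Π̃ (Appendix B): averaging the
entrywise evaluation of κ on the piecewise-constant interpolation recovers the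
direct evaluation of κ on the aggregate values. -/
theorem projector_commutes_with_kappa
    {ι A : Type*} [Fintype ι] [Fintype A] [DecidableEq ι] [DecidableEq A]
    (a : ι → A)
    (W : Matrix ι A ℝ) (hW : ∀ (i : ι) (c : A), W i c = if a i = c then 1 else 0)
    (m : ι → ℝ) (hm : ∀ i, 0 < m i)
    (hsurj : ∀ c : A, ∃ i : ι, a i = c) :
    ∀ (κ : ℝ → ℝ) (v : A → ℝ),
      ((Wᵀ * Matrix.diagonal m * W)⁻¹ * (Wᵀ * Matrix.diagonal m)) *ᵥ
          (fun i => κ (v (a i))) = fun c => κ (v c) := by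
  intro κ v
  have hWa : W = aggregationMatrix ℝ a := by ext i c; exact hW i c
  have hGram : IsUnit (Wᵀ * diagonal m * W).det := by
    rw [hWa, transpose_aggregationMatrix_mul_diagonal_mul, det_diagonal, isUnit_iff_ne_zero,
      prod_ne_zero_iff]
    exact fun c _ => (sum_fiber_pos a hm (hsurj c)).ne'
  have hinterp : (fun i => κ (v (a i))) = W *ᵥ (κ ∘ v) := by
    rw [hWa, aggregationMatrix_mulVec]; rfl
  rw [hinterp, inv_mul_mulVec_mulVec_cancel _ _ hGram]
  rfl
end
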